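/- Let G1 be an r1-regular graph with n1 vertices and m1 edges (r1 ≥ 1), G2 an r2-regular graph with n2 vertices, and G3 an r3-regular graph with n3 vertices, and let 𝒢 = G1^S ⋈ (G2^V ∪ G3^E). Identify the vertex set of 𝒢 with V(G1) ⊔ I(G1) ⊔ (V(G1)×V(G2)) ⊔ (I(G1)×V(G3)). Then the normalized Laplacian of 𝒢 is the block matrix 𝓛(𝒢) = [[I_{n1}, −a·R(G1), O, O], [−a·R(G1)ᵀ, I_{m1}, −R(G1)ᵀ ⊗ bᵀ, −I_{m1} ⊗ cᵀ], [O, −R(G1) ⊗ b, I_{n1} ⊗ (I_{n2} − A(G2)/(r1+r2)), O], [O, −I_{m1} ⊗ c, O, I_{m1} ⊗ (I_{n3} − A(G3)/(r3+1))]], where R(G1) is the incidence matrix of G1, a = 1/√(r1(2n2+n3+2)), b = (1/√((r1+r2)(2n2+n3+2)))·𝟏_{n2}, c = (1/√((r3+1)(2n2+n3+2)))·𝟏_{n3}, ⊗ is the Kronecker product, and 𝟏_k is the all-ones column vector of size k. -/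

import Mathlib

/-!
Each of the four vertex classes of `G1^S ⋈ (G2^V ∪ G3^E)` has constant degree: `r1` on `V(G1)`,
`2 n2 + n3 + 2` on the inserted vertices (two ends, two full copies of `G2`, one copy of `G3`),
`r1 + r2` on the copies of `G2` and `r3 + 1` on the copies of `G3`. Hence the entry
`-A x y / √(d x d y)` of the normalized Laplacian only depends on the adjacency of `x, y` and on
their classes, and it is compared with the block matrix entry by entry.
-/

open Matrix Polynomial BigOperators Kronecker

namespace NLS

variable {V : Type*}

/-- Adjacency matrix over `ℝ` (classical decidability). -/
noncomputable def adjMat (G : SimpleGraph V) : Matrix V V ℝ :=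
  letI := Classical.decRel G.Adj
  G.adjMatrix ℝ

/-- Degree of a vertex (classical decidability). -/
noncomputable def deg [Fintype V] (G : SimpleGraph V) (v : V) : ℕ :=
  letI := Classical.decRel G.Adj
  G.degree v

/-- The normalized Laplacian `I - D^{-1/2} A D^{-1/2}`. -/
noncomputable def normLap [Fintype V] (G : SimpleGraph V) : Matrix V V ℝ :=
  letI := Classical.decEq V
  1 - (Matrix.diagonal fun v => (Real.sqrt (deg G v))⁻¹) * adjMat G *
      (Matrix.diagonal fun v => (Real.sqrt (deg G v))⁻¹)

/-- `G` is `r`-regular. -/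
def IsReg [Fintype V] (G : SimpleGraph V) (r : ℕ) : Prop := ∀ v, deg G v = r

/-- Vertex-edge incidence matrix over `ℝ`. -/
def incMat [DecidableEq V] (G : SimpleGraph V) : Matrix V G.edgeSet ℝ :=
  Matrix.of fun v e => if v ∈ (e : Sym2 V) then 1 else 0

/-- The number of spanning trees of `G`. -/
noncomputable def numSpanningTrees [Fintype V] (G : SimpleGraph V) : ℕ :=
  Nat.card {H : SimpleGraph V // H ≤ G ∧ H.IsTree}

section Corona

variable {V1 V2 V3 : Type*}

/-- Adjacency for the subdivision vertex-edge neighbourhood **vertex**-corona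
`G1^S ⋈ (G2^V ∪ G3^E)`. Vertices: original `V1`, inserted `G1.edgeSet`,
copies of `G2` indexed by `V1`, copies of `G3` indexed by `G1.edgeSet`. -/
def svevAdj (G1 : SimpleGraph V1) (G2 : SimpleGraph V2) (G3 : SimpleGraph V3) :
    (V1 ⊕ (G1.edgeSet ⊕ ((V1 × V2) ⊕ (G1.edgeSet × V3)))) →
    (V1 ⊕ (G1.edgeSet ⊕ ((V1 × V2) ⊕ (G1.edgeSet × V3)))) → Prop
  | .inl v, .inr (.inl e) => v ∈ (e : Sym2 V1)
  | .inr (.inl e), .inl v => v ∈ (e : Sym2 V1)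
  | .inr (.inl e), .inr (.inr (.inl p)) => p.1 ∈ (e : Sym2 V1)
  | .inr (.inr (.inl p)), .inr (.inl e) => p.1 ∈ (e : Sym2 V1)
  | .inr (.inl e), .inr (.inr (.inr q)) => q.1 = e
  | .inr (.inr (.inr q)), .inr (.inl e) => q.1 = e
  | .inr (.inr (.inl p)), .inr (.inr (.inl p')) => p.1 = p'.1 ∧ G2.Adj p.2 p'.2
  | .inr (.inr (.inr q)), .inr (.inr (.inr q')) => q.1 = q'.1 ∧ G3.Adj q.2 q'.2
  | _, _ => False

/-- The subdivision vertex-edge neighbourhood vertex-corona `G1^S ⋈ (G2^V ∪ G3^E)`. -/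
def svev (G1 : SimpleGraph V1) (G2 : SimpleGraph V2) (G3 : SimpleGraph V3) :
    SimpleGraph (V1 ⊕ (G1.edgeSet ⊕ ((V1 × V2) ⊕ (G1.edgeSet × V3)))) where
  Adj := svevAdj G1 G2 G3
  symm := by
    constructor
    rintro (v|e|p|q) (v'|e'|p'|q') h <;>
      first
        | exact h
        | exact ⟨h.1.symm, h.2.symm⟩
        | exact h.elim
  loopless := by
    constructor
    rintro (v|e|p|q) h
    · exact h
    · exact h
    · exact G2.loopless.irrefl _ h.2
    · exact G3.loopless.irrefl _ h.2

/-- Adjacency for the subdivision vertex-edge neighbourhood **edge**-corona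
`G1^S ◊ (G2^V ∪ G3^E)`. Vertices: original `V1`, inserted `G1.edgeSet`,
copies of `G2` indexed by `G1.edgeSet`, copies of `G3` indexed by `V1`. -/
def sveeAdj (G1 : SimpleGraph V1) (G2 : SimpleGraph V2) (G3 : SimpleGraph V3) :
    (V1 ⊕ (G1.edgeSet ⊕ ((G1.edgeSet × V2) ⊕ (V1 × V3)))) →
    (V1 ⊕ (G1.edgeSet ⊕ ((G1.edgeSet × V2) ⊕ (V1 × V3)))) → Prop
  | .inl v, .inr (.inl e) => v ∈ (e : Sym2 V1)
  | .inr (.inl e), .inl v => v ∈ (e : Sym2 V1)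
  | .inl v, .inr (.inr (.inl p)) => v ∈ (p.1 : Sym2 V1)
  | .inr (.inr (.inl p)), .inl v => v ∈ (p.1 : Sym2 V1)
  | .inl v, .inr (.inr (.inr q)) => q.1 = v
  | .inr (.inr (.inr q)), .inl v => q.1 = v
  | .inr (.inr (.inl p)), .inr (.inr (.inl p')) => p.1 = p'.1 ∧ G2.Adj p.2 p'.2
  | .inr (.inr (.inr q)), .inr (.inr (.inr q')) => q.1 = q'.1 ∧ G3.Adj q.2 q'.2
  | _, _ => False

/-- The subdivision vertex-edge neighbourhood edge-corona `G1^S ◊ (G2^V ∪ G3^E)`. -/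
def svee (G1 : SimpleGraph V1) (G2 : SimpleGraph V2) (G3 : SimpleGraph V3) :
    SimpleGraph (V1 ⊕ (G1.edgeSet ⊕ ((G1.edgeSet × V2) ⊕ (V1 × V3)))) where
  Adj := sveeAdj G1 G2 G3
  symm := by
    constructor
    rintro (v|e|p|q) (v'|e'|p'|q') h <;>
      first
        | exact h
        | exact ⟨h.1.symm, h.2.symm⟩
        | exact h.elim
  loopless := by
    constructor
    rintro (v|e|p|q) h
    · exact h
    · exact h
    · exact G2.loopless.irrefl _ h.2
    · exact G3.loopless.irrefl _ h.2

end Corona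

section

open Finset

lemma adjMat_apply (G : SimpleGraph V) [DecidableRel G.Adj] (x y : V) :
    adjMat G x y = if G.Adj x y then 1 else 0 := by
  unfold adjMat
  rw [SimpleGraph.adjMatrix_apply]
  congr

lemma deg_eq_card_neighborFinset [Fintype V] (G : SimpleGraph V) (v : V)
    [Fintype (G.neighborSet v)] : deg G v = #(G.neighborFinset v) := by
  unfold deg
  rw [SimpleGraph.card_neighborFinset_eq_degree]
  congr!

lemma normLap_apply [Fintype V] [DecidableEq V] (G : SimpleGraph V) [DecidableRel G.Adj]
    (x y : V) :
    normLap G x y = (if x = y then 1 else 0) -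
      if G.Adj x y then (√(deg G x) * √(deg G y))⁻¹ else 0 := by
  -- `normLap` is built with `Classical.decEq V`, which `one_apply` has to match
  let := Classical.decEq V
  unfold normLap
  rw [Matrix.sub_apply, mul_diagonal, diagonal_mul, adjMat_apply, one_apply]
  split_ifs <;> simp_all [mul_comm]

lemma card_filter_mem_edge [Fintype V] [DecidableEq V] (G : SimpleGraph V) (e : G.edgeSet) :
    #{v | v ∈ (e : Sym2 V)} = 2 := by
  rw [← Sym2.card_toFinset_of_not_isDiag _ (G.not_isDiag_of_mem_edgeSet e.2)]
  congr 1
  ext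
  simp

lemma card_filter_incident_eq_deg [Fintype V] [DecidableEq V] (G : SimpleGraph V)
    [Fintype G.edgeSet] (v : V) : #{e : G.edgeSet | v ∈ (e : Sym2 V)} = deg G v := by
  classical
  rw [deg, ← SimpleGraph.card_incidenceSet_eq_degree, ← Fintype.card_subtype]
  exact Fintype.card_congr (Equiv.subtypeSubtypeEquivSubtypeInter (· ∈ G.edgeSet) (v ∈ ·))

lemma inv_sqrt_mul_inv_sqrt {x : ℝ} (hx : 0 ≤ x) : (√x)⁻¹ * (√x)⁻¹ = x⁻¹ := by
  rw [← mul_inv, Real.mul_self_sqrt hx]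

section DegreesOfSvev

variable {V1 V2 V3 : Type*} [Fintype V1] [Fintype V2] [Fintype V3]
  (G1 : SimpleGraph V1) (G2 : SimpleGraph V2) (G3 : SimpleGraph V3) [Fintype G1.edgeSet]

lemma deg_svev_inl [DecidableEq V1] (v : V1) : deg (svev G1 G2 G3) (.inl v) = deg G1 v := by
  classical
  have hN : (svev G1 G2 G3).neighborFinset (.inl v) =
      disjSum ∅ (disjSum {e : G1.edgeSet | v ∈ (e : Sym2 V1)} ∅) := by
    ext w
    rw [SimpleGraph.mem_neighborFinset]
    rcases w with w | e | ⟨i, u⟩ | ⟨e, w⟩ <;> simp [svev, svevAdj]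
  rw [deg_eq_card_neighborFinset, hN, card_disjSum, card_disjSum, card_filter_incident_eq_deg]
  simp

lemma deg_svev_inserted [DecidableEq V1] (e : G1.edgeSet) :
    deg (svev G1 G2 G3) (.inr (.inl e)) = 2 * Fintype.card V2 + Fintype.card V3 + 2 := by
  classical
  have hN : (svev G1 G2 G3).neighborFinset (.inr (.inl e)) = disjSum {v | v ∈ (e : Sym2 V1)}
      (disjSum ∅ (disjSum (({v | v ∈ (e : Sym2 V1)} : Finset V1) ×ˢ (univ : Finset V2))
        ({e} ×ˢ (univ : Finset V3)))) := by
    ext w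
    rw [SimpleGraph.mem_neighborFinset]
    rcases w with w | e' | ⟨i, u⟩ | ⟨e', w⟩ <;> simp [svev, svevAdj]
    exact eq_comm
  rw [deg_eq_card_neighborFinset, hN]
  simp [card_disjSum, card_product, card_filter_mem_edge]
  ring

lemma deg_svev_copyG2 [DecidableEq V1] (i : V1) (u : V2) :
    deg (svev G1 G2 G3) (.inr (.inr (.inl (i, u)))) = deg G1 i + deg G2 u := by
  classical
  have hN : (svev G1 G2 G3).neighborFinset (.inr (.inr (.inl (i, u)))) = disjSum ∅
      (disjSum {e : G1.edgeSet | i ∈ (e : Sym2 V1)} (disjSum ({i} ×ˢ G2.neighborFinset u) ∅)) := by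
    ext w
    rw [SimpleGraph.mem_neighborFinset]
    rcases w with w | e | ⟨i', u'⟩ | ⟨e, w⟩ <;> simp [svev, svevAdj]
    exact and_comm
  rw [deg_eq_card_neighborFinset, hN]
  simp [card_disjSum, card_filter_incident_eq_deg, deg_eq_card_neighborFinset]

lemma deg_svev_copyG3 (e : G1.edgeSet) (w : V3) :
    deg (svev G1 G2 G3) (.inr (.inr (.inr (e, w)))) = deg G3 w + 1 := by
  classical
  have hN : (svev G1 G2 G3).neighborFinset (.inr (.inr (.inr (e, w)))) = disjSum ∅
      (disjSum {e} (disjSum ∅ ({e} ×ˢ G3.neighborFinset w))) := by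
    ext x
    rw [SimpleGraph.mem_neighborFinset]
    rcases x with v | e' | ⟨i, u⟩ | ⟨e', w'⟩ <;> simp [svev, svevAdj] <;> tauto
  rw [deg_eq_card_neighborFinset, hN]
  simp [card_disjSum, deg_eq_card_neighborFinset]
  ring

end DegreesOfSvev

end

theorem stmt_4_general {V1 V2 V3 : Type*} [Fintype V1] [DecidableEq V1]
    [Fintype V2] [DecidableEq V2] [Fintype V3] [DecidableEq V3]
    (G1 : SimpleGraph V1) (G2 : SimpleGraph V2) (G3 : SimpleGraph V3)
    [Fintype G1.edgeSet]
    (r1 r2 r3 : ℕ)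
    (h1 : IsReg G1 r1) (h2 : IsReg G2 r2) (h3 : IsReg G3 r3)
    (a b c : ℝ)
    (ha : a = (Real.sqrt ((r1 : ℝ) * (2 * Fintype.card V2 + Fintype.card V3 + 2)))⁻¹)
    (hb : b = (Real.sqrt (((r1 : ℝ) + r2) * (2 * Fintype.card V2 + Fintype.card V3 + 2)))⁻¹)
    (hc : c = (Real.sqrt (((r3 : ℝ) + 1) * (2 * Fintype.card V2 + Fintype.card V3 + 2)))⁻¹) :
    normLap (svev G1 G2 G3) =
      Matrix.fromBlocks (1 : Matrix V1 V1 ℝ)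
        (Matrix.fromCols (-a • incMat G1)
          (0 : Matrix V1 ((V1 × V2) ⊕ (G1.edgeSet × V3)) ℝ))
        (Matrix.fromRows (-a • (incMat G1)ᵀ)
          (0 : Matrix ((V1 × V2) ⊕ (G1.edgeSet × V3)) V1 ℝ))
        (Matrix.fromBlocks (1 : Matrix G1.edgeSet G1.edgeSet ℝ)
          (Matrix.fromCols
            (Matrix.of fun (e : G1.edgeSet) (p : V1 × V2) => -(incMat G1 p.1 e * b))
            (Matrix.of fun (e : G1.edgeSet) (q : G1.edgeSet × V3) =>
              -(if q.1 = e then c else 0)))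
          (Matrix.fromRows
            (Matrix.of fun (p : V1 × V2) (e : G1.edgeSet) => -(incMat G1 p.1 e * b))
            (Matrix.of fun (q : G1.edgeSet × V3) (e : G1.edgeSet) =>
              -(if q.1 = e then c else 0)))
          (Matrix.fromBlocks
            ((1 : Matrix V1 V1 ℝ) ⊗ₖ
              ((1 : Matrix V2 V2 ℝ) - ((r1 : ℝ) + r2)⁻¹ • adjMat G2))
            0 0
            ((1 : Matrix G1.edgeSet G1.edgeSet ℝ) ⊗ₖ
              ((1 : Matrix V3 V3 ℝ) - ((r3 : ℝ) + 1)⁻¹ • adjMat G3)))) := by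
  classical
  set N : ℝ := 2 * Fintype.card V2 + Fintype.card V3 + 2
  have deg_inl : ∀ v, (deg (svev G1 G2 G3) (.inl v) : ℝ) = r1 := by
    simp [deg_svev_inl, h1 _]
  have deg_inserted : ∀ e, (deg (svev G1 G2 G3) (.inr (.inl e)) : ℝ) = N := by
    simp [deg_svev_inserted, N]
  have deg_copyG2 : ∀ i u, (deg (svev G1 G2 G3) (.inr (.inr (.inl (i, u)))) : ℝ) = r1 + r2 := by
    simp [deg_svev_copyG2, h1 _, h2 _]
  have deg_copyG3 : ∀ e w, (deg (svev G1 G2 G3) (.inr (.inr (.inr (e, w)))) : ℝ) = r3 + 1 := by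
    simp [deg_svev_copyG3, h3 _]
  rw [Real.sqrt_mul (by positivity)] at ha hb hc
  ext x y
  rw [normLap_apply]
  rcases x with v | e | ⟨i, u⟩ | ⟨e, w⟩ <;> rcases y with v' | e' | ⟨i', u'⟩ | ⟨e', w'⟩ <;>
    simp only [deg_inl, deg_inserted, deg_copyG2, deg_copyG3] <;>
    simp [ha, hb, hc, svev, svevAdj, incMat, one_apply, adjMat_apply, ite_and, ite_sub_ite,
      mul_comm (√N)⁻¹, inv_sqrt_mul_inv_sqrt (by positivity : (0 : ℝ) ≤ r1 + r2),
      inv_sqrt_mul_inv_sqrt (by positivity : (0 : ℝ) ≤ r3 + 1)]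

theorem stmt_4 {V1 V2 V3 : Type*} [Fintype V1] [DecidableEq V1]
    [Fintype V2] [DecidableEq V2] [Fintype V3] [DecidableEq V3]
    (G1 : SimpleGraph V1) (G2 : SimpleGraph V2) (G3 : SimpleGraph V3)
    [Fintype G1.edgeSet]
    (r1 r2 r3 : ℕ) (hr1 : 1 ≤ r1)
    (h1 : IsReg G1 r1) (h2 : IsReg G2 r2) (h3 : IsReg G3 r3)
    (a b c : ℝ)
    (ha : a = (Real.sqrt ((r1 : ℝ) * (2 * Fintype.card V2 + Fintype.card V3 + 2)))⁻¹)
    (hb : b = (Real.sqrt (((r1 : ℝ) + r2) * (2 * Fintype.card V2 + Fintype.card V3 + 2)))⁻¹)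
    (hc : c = (Real.sqrt (((r3 : ℝ) + 1) * (2 * Fintype.card V2 + Fintype.card V3 + 2)))⁻¹) :
    normLap (svev G1 G2 G3) =
      Matrix.fromBlocks (1 : Matrix V1 V1 ℝ)
        (Matrix.fromCols (-a • incMat G1)
          (0 : Matrix V1 ((V1 × V2) ⊕ (G1.edgeSet × V3)) ℝ))
        (Matrix.fromRows (-a • (incMat G1)ᵀ)
          (0 : Matrix ((V1 × V2) ⊕ (G1.edgeSet × V3)) V1 ℝ))
        (Matrix.fromBlocks (1 : Matrix G1.edgeSet G1.edgeSet ℝ)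
          (Matrix.fromCols
            (Matrix.of fun (e : G1.edgeSet) (p : V1 × V2) => -(incMat G1 p.1 e * b))
            (Matrix.of fun (e : G1.edgeSet) (q : G1.edgeSet × V3) =>
              -(if q.1 = e then c else 0)))
          (Matrix.fromRows
            (Matrix.of fun (p : V1 × V2) (e : G1.edgeSet) => -(incMat G1 p.1 e * b))
            (Matrix.of fun (q : G1.edgeSet × V3) (e : G1.edgeSet) =>
              -(if q.1 = e then c else 0)))
          (Matrix.fromBlocks
            ((1 : Matrix V1 V1 ℝ) ⊗ₖ
              ((1 : Matrix V2 V2 ℝ) - ((r1 : ℝ) + r2)⁻¹ • adjMat G2))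
            0 0
            ((1 : Matrix G1.edgeSet G1.edgeSet ℝ) ⊗ₖ
              ((1 : Matrix V3 V3 ℝ) - ((r3 : ℝ) + 1)⁻¹ • adjMat G3)))) :=
  stmt_4_general G1 G2 G3 r1 r2 r3 h1 h2 h3 a b c ha hb hc

end NLS
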